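/- Let X be a metric space, G a group acting on X by isometries, and ε : G → ℝ a conjugation-invariant assignment. Define the thin part X₋ := ⋃_{γ ∈ G, γ ≠ 1} {x ∈ X : d(x, γ·x) < ε(γ)}, and assume additionally that each sublevel set {x ∈ X : d(x, γ·x) < ε(γ)} (for γ ≠ 1) is a connected subset of X. If W is a connected component of X₋, x ∈ W, and γ ∈ G with γ ≠ 1 satisfies d(x, γ·x) < ε(γ), then γ·W = W. -/

import Mathlib

open Pointwise

/-! The sublevel set `{z | d(z, γ z) < ε γ}` is connected, lies in the thin part and contains
both `x` and `γ • x` (as `γ` is an isometry), so `γ • x` lies in the component `W` of `x`.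
Conjugation invariance of `ε` makes the thin part `G`-invariant, so `γ` maps `W` onto the
component of `γ • x`, which is `W` again. -/

section Topology

variable {G X : Type*} [Group G] [TopologicalSpace X] [MulAction G X] [ContinuousConstSMul G X]

theorem smul_connectedComponentIn (γ : G) {F : Set X} {x : X} (hx : x ∈ F) :
    γ • connectedComponentIn F x = connectedComponentIn (γ • F) (γ • x) := by
  simpa only [Homeomorph.smul_apply, Set.image_smul] using
    (Homeomorph.smul γ).image_connectedComponentIn hx

theorem smul_connectedComponentIn_eq_self {γ : G} {F : Set X} {x : X} (hF : γ • F = F)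
    (hγx : γ • x ∈ connectedComponentIn F x) :
    γ • connectedComponentIn F x = connectedComponentIn F x := by
  rw [smul_connectedComponentIn γ (connectedComponentIn_nonempty_iff.mp ⟨_, hγx⟩), hF,
    ← connectedComponentIn_eq hγx]

end Topology

section Isometric

variable {G X : Type*} [Group G] [PseudoMetricSpace X] [MulAction G X] [IsIsometricSMul G X]

variable (X) in
def thinPart (ε : G → ℝ) : Set X :=
  ⋃ γ ∈ {γ : G | γ ≠ 1}, {x : X | dist x (γ • x) < ε γ}

theorem dist_smul_conj_smul (γ g : G) (x : X) :
    dist (γ • x) ((γ * g * γ⁻¹) • γ • x) = dist x (g • x) := by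
  rw [mul_smul, mul_smul, inv_smul_smul, dist_smul]

theorem smul_thinPart_subset {ε : G → ℝ} (hε : ∀ g γ : G, ε (g * γ * g⁻¹) = ε γ) (γ : G) :
    γ • thinPart X ε ⊆ thinPart X ε := by
  rintro _ ⟨x, hx, rfl⟩
  simp only [thinPart, Set.mem_iUnion, Set.mem_ofPred_eq] at hx ⊢
  obtain ⟨g, hg, hgx⟩ := hx
  exact ⟨γ * g * γ⁻¹, conj_eq_one_iff.not.mpr hg, by rwa [hε, dist_smul_conj_smul]⟩

theorem smul_thinPart {ε : G → ℝ} (hε : ∀ g γ : G, ε (g * γ * g⁻¹) = ε γ) (γ : G) :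
    γ • thinPart X ε = thinPart X ε :=
  (smul_thinPart_subset hε γ).antisymm <| Set.subset_smul_set_iff.mpr <| smul_thinPart_subset hε γ⁻¹

end Isometric

/-- With `X₋` the thin part for a conjugation-invariant assignment `ε`, assuming each
sublevel set `{x | d(x, γ·x) < ε γ}` (for `γ ≠ 1`) is connected: if `W` is a connected
component of `X₋`, `x ∈ W`, and `γ ≠ 1` satisfies `d(x, γ·x) < ε γ`, then `γ·W = W`. -/
theorem thin_component_stabilized {G X : Type*} [Group G] [MetricSpace X]
    [MulAction G X] [IsIsometricSMul G X] (ε : G → ℝ)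
    (hε : ∀ g γ : G, ε (g * γ * g⁻¹) = ε γ)
    (Xminus : Set X)
    (hXminus : Xminus = ⋃ γ ∈ {γ : G | γ ≠ 1}, {x : X | dist x (γ • x) < ε γ})
    (hconn : ∀ γ : G, γ ≠ 1 → IsPreconnected {x : X | dist x (γ • x) < ε γ})
    (W : Set X) (hW : ∃ y ∈ Xminus, W = connectedComponentIn Xminus y)
    (x : X) (hx : x ∈ W) (γ : G) (hγ : γ ≠ 1) (hd : dist x (γ • x) < ε γ) :
    γ • W = W := by
  obtain ⟨y, -, rfl⟩ := hW
  replace hXminus : Xminus = thinPart X ε := hXminus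
  subst hXminus
  have hsub : {z : X | dist z (γ • z) < ε γ} ⊆ thinPart X ε :=
    Set.subset_biUnion_of_mem (u := fun g : G ↦ {z : X | dist z (g • z) < ε g}) (by exact hγ)
  have hγx : γ • x ∈ connectedComponentIn (thinPart X ε) x :=
    (hconn γ hγ).subset_connectedComponentIn hd hsub (by rwa [Set.mem_ofPred_eq, dist_smul])
  rw [connectedComponentIn_eq hx]
  exact smul_connectedComponentIn_eq_self (smul_thinPart hε γ) hγx
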